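/- For all n ≥ 4, with k = ⌊(n+3)/2⌋, the sum ∑_{j=0}^{k} (n+1-2k+j) C(n-j, k-j) p(j) is positive, where terms with n-j < k-j are understood via C(n-j,k-j)=0 and the coefficients n+1-2k+j may be negative. -/

import Mathlib

/-!
The weight `n + 1 - 2k + j` is negative only for `j ≤ 1`, where `p j = 1`. Removing a part `1`
shows `p (m + 1) = p m + #{partitions of m + 1 without a part 1} ≥ p m + 1`, so
`p j = max j 1 + e j` with `e ≥ 0` and `e 0 = e 1 = 0`; hence the `e`-part of the sum is
nonnegative. For `max j 1` the sum has a closed form, by the upper Chu–Vandermonde identity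
`∑ j, C(j, r) C(n - j, k - j) = C(n + 1, n - k + r + 1)` for `r = 1, 2`: at the peak it equals
`2 C(n + 1, k - 2) - C(n, k) > 0` for even `n` and exactly `0` for odd `n`. In the odd case the
partition `2 + 2` gives `e 4 ≥ 1`, which makes the sum positive.
-/

/-- The partition function: number of partitions of `n`, with `p 0 = 1`. -/
def partitionFn (n : ℕ) : ℕ := Fintype.card (Nat.Partition n)

open Finset

theorem Nat.sum_antidiagonal_choose_mul_add_choose (s r k : ℕ) :
    ∑ ij ∈ antidiagonal k, ij.1.choose r * (s + ij.2).choose s =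
      (s + k + 1).choose (s + r + 1) := by
  induction k generalizing r with
  | zero => cases r <;> simp [Nat.choose_eq_zero_of_lt]
  | succ k ih =>
    cases r with
    | zero => simpa using sum_antidiagonal_choose_add s (k + 1)
    | succ r =>
      rw [Finset.Nat.sum_antidiagonal_succ, Nat.choose_zero_succ, zero_mul, zero_add]
      simp only [Nat.choose_succ_succ' _ r, add_mul, sum_add_distrib, ih]
      rw [← add_assoc s r, ← Nat.choose_succ_succ']
      ring_nf

theorem Nat.sum_range_choose_mul_choose_sub (r : ℕ) {n k : ℕ} (hk : k ≤ n) :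
    ∑ j ∈ range (k + 1), j.choose r * (n - j).choose (k - j) =
      (n + 1).choose (n - k + r + 1) := by
  obtain ⟨s, rfl⟩ := Nat.exists_eq_add_of_le' hk
  rw [Nat.add_sub_cancel, ← Nat.sum_antidiagonal_choose_mul_add_choose,
    Finset.Nat.sum_antidiagonal_eq_sum_range_succ (fun j i => j.choose r * (s + i).choose s)]
  refine sum_congr rfl fun j hj => ?_
  rw [show s + k - j = s + (k - j) by grind, Nat.choose_symm_add]

def tiltedSum (n k : ℕ) (f : ℕ → ℤ) : ℤ :=
  ∑ j ∈ range (k + 1), ((n : ℤ) + 1 - 2 * k + j) * (n - j).choose (k - j) * f j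

section TiltedSum

variable {n k : ℕ}

theorem tiltedSum_add (f g : ℕ → ℤ) :
    tiltedSum n k (f + g) = tiltedSum n k f + tiltedSum n k g := by
  simp only [tiltedSum, Pi.add_apply, mul_add, sum_add_distrib]

theorem tiltedSum_natCast (hk : k ≤ n) :
    tiltedSum n k (fun j => j) =
      ((n : ℤ) + 2 - 2 * k) * (n + 1).choose (n - k + 2) + 2 * (n + 1).choose (n - k + 3) := by
  have h1 := Nat.sum_range_choose_mul_choose_sub 1 hk
  have h2 := Nat.sum_range_choose_mul_choose_sub 2 hk
  simp only [Nat.choose_one_right] at h1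
  have hsq (j : ℕ) : (j : ℤ) * (j - 1) = 2 * j.choose 2 := by
    qify; rw [Nat.cast_choose_two]; ring
  calc tiltedSum n k (fun j => j)
      = ∑ j ∈ range (k + 1), (((n : ℤ) + 2 - 2 * k) * (j * (n - j).choose (k - j)) +
          2 * (j.choose 2 * (n - j).choose (k - j))) :=
        sum_congr rfl fun j _ => by linear_combination ((n - j).choose (k - j) : ℤ) * hsq j
    _ = _ := by
      rw [sum_add_distrib, ← mul_sum, ← mul_sum]
      exact_mod_cast congr_arg₂ (fun a b : ℕ => ((n : ℤ) + 2 - 2 * k) * a + 2 * b) h1 h2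

theorem tiltedSum_ite_zero :
    tiltedSum n k (fun j => if j = 0 then 1 else 0) = ((n : ℤ) + 1 - 2 * k) * n.choose k := by
  simp [tiltedSum]

theorem single_le_tiltedSum {i : ℕ} {f : ℕ → ℤ} (hkn : 2 * k ≤ n + 3) (hf : ∀ j, 0 ≤ f j)
    (hf0 : f 0 = 0) (hf1 : f 1 = 0) (hi : i ≤ k) :
    ((n : ℤ) + 1 - 2 * k + i) * (n - i).choose (k - i) * f i ≤ tiltedSum n k f := by
  refine single_le_sum (f := fun j => ((n : ℤ) + 1 - 2 * k + j) * (n - j).choose (k - j) * f j)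
    (fun j _ => ?_) (mem_range_succ_iff.2 hi)
  match j with
  | 0 => simp [hf0]
  | 1 => simp [hf1]
  | j + 2 =>
    have hw : (0 : ℤ) ≤ n + 1 - 2 * k + (j + 2 : ℕ) := by omega
    exact mul_nonneg (mul_nonneg hw (Int.natCast_nonneg _)) (hf _)

end TiltedSum

theorem partitionFn_zero : partitionFn 0 = 1 := Fintype.card_unique

theorem partitionFn_one : partitionFn 1 = 1 := Fintype.card_unique

theorem partitionFn_succ (m : ℕ) :
    partitionFn (m + 1) =
      partitionFn m + Fintype.card {q : (m + 1).Partition // 1 ∉ q.parts} := by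
  have h : Fintype.card {q : (m + 1).Partition // 1 ∈ q.parts} = partitionFn m :=
    Fintype.card_congr (Nat.Partition.partitionWithPartEquiv le_rfl (Nat.le_add_left 1 m))
  have hle := h ▸ Fintype.card_subtype_le fun q : (m + 1).Partition => 1 ∈ q.parts
  rw [Fintype.card_subtype_compl, h]
  exact (Nat.add_sub_cancel' hle).symm

theorem partitionFn_add_one_le {m : ℕ} (hm : 1 ≤ m) : partitionFn m + 1 ≤ partitionFn (m + 1) := by
  rw [partitionFn_succ, Nat.add_le_add_iff_left]
  exact Fintype.card_pos_iff.2 ⟨⟨.indiscrete (m + 1), by simp; omega⟩⟩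

theorem le_partitionFn (n : ℕ) : n ≤ partitionFn n := by
  induction n with
  | zero => exact Nat.zero_le _
  | succ m ih =>
    rcases Nat.eq_zero_or_pos m with rfl | hm
    · exact partitionFn_one.ge
    · exact (Nat.succ_le_succ ih).trans (partitionFn_add_one_le hm)

theorem five_le_partitionFn_four : 5 ≤ partitionFn 4 := by
  have : 1 < Fintype.card {q : (3 + 1).Partition // 1 ∉ q.parts} :=
    Fintype.one_lt_card_iff.2 ⟨⟨.indiscrete 4, by simp⟩,
      ⟨⟨{2, 2}, by simp, rfl⟩, by simp⟩, by simp [Nat.Partition.ext_iff]⟩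
  rw [partitionFn_succ]
  have := le_partitionFn 3
  omega

def partitionExcess (j : ℕ) : ℤ := partitionFn j - max (j : ℤ) 1

theorem partitionExcess_nonneg (j : ℕ) : 0 ≤ partitionExcess j := by
  rcases Nat.eq_zero_or_pos j with rfl | hj
  · simp [partitionExcess, partitionFn_zero]
  · have := le_partitionFn j
    simp only [partitionExcess, sub_nonneg, max_le_iff]
    omega

theorem partitionExcess_zero : partitionExcess 0 = 0 := by
  simp [partitionExcess, partitionFn_zero]

theorem partitionExcess_one : partitionExcess 1 = 0 := by
  simp [partitionExcess, partitionFn_one]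

theorem one_le_partitionExcess_four : 1 ≤ partitionExcess 4 := by
  have := five_le_partitionFn_four
  simp only [partitionExcess]
  omega

theorem partitionFn_eq_add_partitionExcess :
    (fun j => (partitionFn j : ℤ)) =
      (fun j : ℕ => (j : ℤ)) + (fun j => if j = 0 then 1 else 0) + partitionExcess := by
  funext j
  rcases Nat.eq_zero_or_pos j with rfl | hj
  · simp [partitionExcess]
  · simp [partitionExcess, hj.ne', max_eq_left (show (1 : ℤ) ≤ j by omega)]

theorem tiltedSum_partitionFn {n k : ℕ} (hk : k ≤ n) :
    tiltedSum n k (fun j => partitionFn j) =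
      ((n : ℤ) + 2 - 2 * k) * (n + 1).choose (n - k + 2) + 2 * (n + 1).choose (n - k + 3) +
        ((n : ℤ) + 1 - 2 * k) * n.choose k + tiltedSum n k partitionExcess := by
  rw [partitionFn_eq_add_partitionExcess, tiltedSum_add, tiltedSum_add, tiltedSum_natCast hk,
    tiltedSum_ite_zero]

theorem tiltedSum_partitionFn_pos_even (t : ℕ) :
    0 < tiltedSum (2 * t + 4) (t + 3) fun j => partitionFn j := by
  have h0 := single_le_tiltedSum (n := 2 * t + 4) (k := t + 3) (i := 0) (by omega)
    partitionExcess_nonneg partitionExcess_zero partitionExcess_one (by omega)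
  rw [tiltedSum_partitionFn (by omega), show 2 * t + 4 - (t + 3) + 2 = t + 3 by omega,
    show 2 * t + 4 - (t + 3) + 3 = t + 4 by omega]
  have hpascal := Nat.choose_succ_succ' (2 * t + 4) (t + 3)
  have hpos := Nat.choose_pos (show t + 4 ≤ 2 * t + 4 by omega)
  rw [partitionExcess_zero, mul_zero] at h0
  push_cast at *
  linarith

theorem tiltedSum_partitionFn_pos_odd (t : ℕ) :
    0 < tiltedSum (2 * t + 5) (t + 4) fun j => partitionFn j := by
  have h4 := single_le_tiltedSum (n := 2 * t + 5) (k := t + 4) (i := 4) (by omega)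
    partitionExcess_nonneg partitionExcess_zero partitionExcess_one (by omega)
  rw [show 2 * t + 5 - 4 = 2 * t + 1 by omega, show t + 4 - 4 = t by omega] at h4
  rw [tiltedSum_partitionFn (by omega), show 2 * t + 5 - (t + 4) + 2 = t + 3 by omega,
    show 2 * t + 5 - (t + 4) + 3 = t + 4 by omega]
  have hpascal₁ := Nat.choose_succ_succ' (2 * t + 5) (t + 3)
  have hpascal₂ := Nat.choose_succ_succ' (2 * t + 5) (t + 2)
  have hsymm : (2 * t + 5).choose (t + 2) = (2 * t + 5).choose (t + 3) := by
    rw [show 2 * t + 5 = t + 2 + (t + 3) by omega, Nat.choose_symm_add]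
  have hpos := Nat.choose_pos (show t ≤ 2 * t + 1 by omega)
  have h1 := one_le_partitionExcess_four
  push_cast at *
  nlinarith

theorem sum_pos_at_peak (n : ℕ) (hn : 4 ≤ n) :
    0 < ∑ j ∈ Finset.range ((n + 3) / 2 + 1),
        ((n : ℤ) + 1 - 2 * ((n + 3) / 2 : ℕ) + j) *
          (Nat.choose (n - j) ((n + 3) / 2 - j)) * partitionFn j := by
  change 0 < tiltedSum n ((n + 3) / 2) fun j => partitionFn j
  obtain ⟨t, rfl | rfl⟩ : ∃ t, n = 2 * t + 4 ∨ n = 2 * t + 5 := ⟨(n - 4) / 2, by omega⟩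
  · rw [show (2 * t + 4 + 3) / 2 = t + 3 by omega]
    exact tiltedSum_partitionFn_pos_even t
  · rw [show (2 * t + 5 + 3) / 2 = t + 4 by omega]
    exact tiltedSum_partitionFn_pos_odd t
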